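/- Let 𝓙 be a generalized complex structure on a finite-dimensional real vector space V, and let W ⊆ V be a split subspace, with N ⊆ V such that V = W ⊕ N and W ⊕ Ann(N) is stable under 𝓙. Let 𝓚 = ψ ∘ (𝓙|_{W⊕Ann(N)}) ∘ ψ⁻¹ be the induced GCS on W, where ψ : W ⊕ Ann(N) → W ⊕ W* is (w,f) ↦ (w, f|_W). Then W, equipped with 𝓚, satisfies the graph condition: the graph {(w,w) : w ∈ W} ⊆ W ⊕ V of the inclusion is a generalized isotropic subspace of W ⊕ V with respect to the twisted product structure (the direct sum of 𝓚̃ and 𝓙). -/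

import Mathlib

/-!
For a linear map `ι : U → V`, the twisted product structure sends `((u, ι u), 0)` to the vector
`((𝓙_U u)₁, (𝓙_V (ι u))₁)` and the covector `(-(𝓙_U u)₂, (𝓙_V (ι u))₂)`. Because of the sign
introduced by the twist, the graph of `ι` is generalized isotropic exactly when `ι` intertwines
the two structures on vectors: `(𝓙_V (ι u))₁ = ι (𝓙_U u)₁` and `ι* (𝓙_V (ι u))₂ = (𝓙_U u)₂`.
For the inclusion of a split subspace `W`, stability of `W ⊕ Ann(N)` puts `(𝓙 w)₁` in `W`, where
the projection along `N` fixes it, and the covector condition holds because the induced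
structure restricts covectors to `W`.
-/

open Module LinearMap

noncomputable def gcPair (V : Type*) [AddCommGroup V] [Module ℝ V]
    (x y : V × Module.Dual ℝ V) : ℝ :=
  -(1/2) * (x.2 y.1 + y.2 x.1)

noncomputable def IsGCS (V : Type*) [AddCommGroup V] [Module ℝ V]
    (J : (V × Module.Dual ℝ V) →ₗ[ℝ] (V × Module.Dual ℝ V)) : Prop :=
  J ∘ₗ J = -LinearMap.id ∧ ∀ x y, gcPair V (J x) (J y) = gcPair V x y

section Blocks

variable (V : Type*) [AddCommGroup V] [Module ℝ V]

noncomputable def blk1 (J : (V × Module.Dual ℝ V) →ₗ[ℝ] (V × Module.Dual ℝ V)) :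
    V →ₗ[ℝ] V :=
  (LinearMap.fst ℝ V (Module.Dual ℝ V)) ∘ₗ J ∘ₗ (LinearMap.inl ℝ V (Module.Dual ℝ V))

noncomputable def blk2 (J : (V × Module.Dual ℝ V) →ₗ[ℝ] (V × Module.Dual ℝ V)) :
    Module.Dual ℝ V →ₗ[ℝ] V :=
  (LinearMap.fst ℝ V (Module.Dual ℝ V)) ∘ₗ J ∘ₗ (LinearMap.inr ℝ V (Module.Dual ℝ V))

noncomputable def blk3 (J : (V × Module.Dual ℝ V) →ₗ[ℝ] (V × Module.Dual ℝ V)) :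
    V →ₗ[ℝ] Module.Dual ℝ V :=
  (LinearMap.snd ℝ V (Module.Dual ℝ V)) ∘ₗ J ∘ₗ (LinearMap.inl ℝ V (Module.Dual ℝ V))

noncomputable def blk4 (J : (V × Module.Dual ℝ V) →ₗ[ℝ] (V × Module.Dual ℝ V)) :
    Module.Dual ℝ V →ₗ[ℝ] Module.Dual ℝ V :=
  (LinearMap.snd ℝ V (Module.Dual ℝ V)) ∘ₗ J ∘ₗ (LinearMap.inr ℝ V (Module.Dual ℝ V))

noncomputable def ofBlocks (A : V →ₗ[ℝ] V) (B : Module.Dual ℝ V →ₗ[ℝ] V)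
    (C : V →ₗ[ℝ] Module.Dual ℝ V) (D : Module.Dual ℝ V →ₗ[ℝ] Module.Dual ℝ V) :
    (V × Module.Dual ℝ V) →ₗ[ℝ] (V × Module.Dual ℝ V) :=
  LinearMap.prod
    (A ∘ₗ LinearMap.fst ℝ V (Module.Dual ℝ V) + B ∘ₗ LinearMap.snd ℝ V (Module.Dual ℝ V))
    (C ∘ₗ LinearMap.fst ℝ V (Module.Dual ℝ V) + D ∘ₗ LinearMap.snd ℝ V (Module.Dual ℝ V))

/-- The twist `𝓙̃ = [[𝓙₁,-𝓙₂],[-𝓙₃,𝓙₄]]` of `𝓙`. -/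
noncomputable def gcTwist (J : (V × Module.Dual ℝ V) →ₗ[ℝ] (V × Module.Dual ℝ V)) :
    (V × Module.Dual ℝ V) →ₗ[ℝ] (V × Module.Dual ℝ V) :=
  ofBlocks V (blk1 V J) (-(blk2 V J)) (-(blk3 V J)) (blk4 V J)

end Blocks

section Prod

variable (U V : Type*) [AddCommGroup U] [Module ℝ U] [AddCommGroup V] [Module ℝ V]

/-- The natural identification `(U⊕V) ⊕ (U⊕V)* ≅ (U ⊕ U*) ⊕ (V ⊕ V*)`. -/
noncomputable def prodPack :
    ((U × V) × Module.Dual ℝ (U × V)) ≃ₗ[ℝ]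
      (U × Module.Dual ℝ U) × (V × Module.Dual ℝ V) :=
  ((LinearEquiv.refl ℝ (U × V)).prodCongr (Module.dualProdDualEquivDual ℝ U V).symm).trans
    (LinearEquiv.prodProdProdComm ℝ U V (Module.Dual ℝ U) (Module.Dual ℝ V))

/-- The direct sum of the structures `J_U` and `J_V` on `U ⊕ V`. -/
noncomputable def directSum
    (JU : (U × Module.Dual ℝ U) →ₗ[ℝ] (U × Module.Dual ℝ U))
    (JV : (V × Module.Dual ℝ V) →ₗ[ℝ] (V × Module.Dual ℝ V)) :
    ((U × V) × Module.Dual ℝ (U × V)) →ₗ[ℝ] ((U × V) × Module.Dual ℝ (U × V)) :=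
  (prodPack U V).symm.toLinearMap ∘ₗ (LinearMap.prodMap JU JV) ∘ₗ (prodPack U V).toLinearMap

/-- The twisted product structure on `U ⊕ V`: the direct sum of `𝓙̃_U` and `𝓙_V`. -/
noncomputable def twistedProd
    (JU : (U × Module.Dual ℝ U) →ₗ[ℝ] (U × Module.Dual ℝ U))
    (JV : (V × Module.Dual ℝ V) →ₗ[ℝ] (V × Module.Dual ℝ V)) :
    ((U × V) × Module.Dual ℝ (U × V)) →ₗ[ℝ] ((U × V) × Module.Dual ℝ (U × V)) :=
  directSum U V (gcTwist U JU) JV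

end Prod

section Subspaces

variable {X : Type*} [AddCommGroup X] [Module ℝ X]

/-- A subspace `Γ` of a GC vector space `(X, J)` is generalized isotropic if
`J(Γ ⊕ 0) ⊆ Γ ⊕ Ann(Γ)`. -/
def GenIsotropic (J : (X × Module.Dual ℝ X) →ₗ[ℝ] (X × Module.Dual ℝ X))
    (Γ : Submodule ℝ X) : Prop :=
  ∀ x ∈ Γ, J (x, 0) ∈ Γ.prod Γ.dualAnnihilator

/-- A subspace `Γ` of a GC vector space `(X, J)` is generalized coisotropic if
`J(0 ⊕ Ann(Γ)) ⊆ Γ ⊕ Ann(Γ)`. -/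
def GenCoisotropic (J : (X × Module.Dual ℝ X) →ₗ[ℝ] (X × Module.Dual ℝ X))
    (Γ : Submodule ℝ X) : Prop :=
  ∀ f ∈ Γ.dualAnnihilator, J (0, f) ∈ Γ.prod Γ.dualAnnihilator

/-- A subspace `Γ` of a GC vector space `(X, J)` is generalized Lagrangian if
`Γ ⊕ Ann(Γ)` is stable under `J`. -/
def GenLagrangian (J : (X × Module.Dual ℝ X) →ₗ[ℝ] (X × Module.Dual ℝ X))
    (Γ : Submodule ℝ X) : Prop :=
  ∀ p ∈ Γ.prod Γ.dualAnnihilator, J p ∈ Γ.prod Γ.dualAnnihilator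

end Subspaces

/-- The GCS induced on a split subspace `W` (with splitting `V = W ⊕ N`):
`ψ ∘ (𝓙|_{W ⊕ Ann(N)}) ∘ ψ⁻¹`, where `ψ(w,f) = (w, f|_W)`. -/
noncomputable def inducedSplitJ
    {V : Type*} [AddCommGroup V] [Module ℝ V]
    (J : (V × Module.Dual ℝ V) →ₗ[ℝ] (V × Module.Dual ℝ V))
    (W N : Submodule ℝ V) (hWN : IsCompl W N) :
    (↥W × Module.Dual ℝ ↥W) →ₗ[ℝ] (↥W × Module.Dual ℝ ↥W) :=
  (LinearMap.prodMap (W.linearProjOfIsCompl N hWN) (W.subtype.dualMap)) ∘ₗ J ∘ₗ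
    (LinearMap.prodMap W.subtype ((W.linearProjOfIsCompl N hWN).dualMap))

theorem LinearMap.mem_dualAnnihilator_graph_iff {R M M₂ : Type*} [CommRing R]
    [AddCommGroup M] [Module R M] [AddCommGroup M₂] [Module R M₂] (f : M →ₗ[R] M₂)
    (φ : Module.Dual R M) (ψ : Module.Dual R M₂) :
    Module.dualProdDualEquivDual R M M₂ (φ, ψ) ∈ f.graph.dualAnnihilator ↔ ψ ∘ₗ f = -φ := by
  simp only [Submodule.mem_dualAnnihilator, LinearMap.mem_graph_iff, Prod.forall,
    LinearMap.ext_iff]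
  simp [eq_neg_iff_add_eq_zero, add_comm]

section TwistedProduct

variable {U V : Type*} [AddCommGroup U] [Module ℝ U] [AddCommGroup V] [Module ℝ V]

theorem twistedProd_apply_inl (JU : (U × Module.Dual ℝ U) →ₗ[ℝ] (U × Module.Dual ℝ U))
    (JV : (V × Module.Dual ℝ V) →ₗ[ℝ] (V × Module.Dual ℝ V)) (x : U × V) :
    twistedProd U V JU JV (x, 0) =
      (((JU (x.1, 0)).1, (JV (x.2, 0)).1),
        Module.dualProdDualEquivDual ℝ U V (-(JU (x.1, 0)).2, (JV (x.2, 0)).2)) := by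
  simp [twistedProd, directSum, prodPack, gcTwist, ofBlocks, blk1, blk3]

theorem genIsotropic_graph_twistedProd_iff
    (JU : (U × Module.Dual ℝ U) →ₗ[ℝ] (U × Module.Dual ℝ U))
    (JV : (V × Module.Dual ℝ V) →ₗ[ℝ] (V × Module.Dual ℝ V)) (ι : U →ₗ[ℝ] V) :
    GenIsotropic (twistedProd U V JU JV) (LinearMap.graph ι) ↔
      ∀ u, (JV (ι u, 0)).1 = ι (JU (u, 0)).1 ∧ (JV (ι u, 0)).2 ∘ₗ ι = (JU (u, 0)).2 := by
  simp only [GenIsotropic, LinearMap.mem_graph_iff, Prod.forall, forall_eq,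
    twistedProd_apply_inl, Submodule.mem_prod, LinearMap.mem_dualAnnihilator_graph_iff, neg_neg]

end TwistedProduct

theorem inducedSplitJ_apply_inl {V : Type*} [AddCommGroup V] [Module ℝ V]
    (J : (V × Module.Dual ℝ V) →ₗ[ℝ] (V × Module.Dual ℝ V))
    (W N : Submodule ℝ V) (hWN : IsCompl W N) (w : W) :
    inducedSplitJ J W N hWN (w, 0) =
      (W.projectionOnto N hWN (J (w, 0)).1, (J (w, 0)).2 ∘ₗ W.subtype) := by
  simp only [inducedSplitJ, LinearMap.comp_apply, LinearMap.prodMap_apply, map_zero]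
  rfl

theorem split_subspace_satisfies_graph_condition_general
    (V : Type*) [AddCommGroup V] [Module ℝ V]
    (J : (V × Module.Dual ℝ V) →ₗ[ℝ] (V × Module.Dual ℝ V))
    (W N : Submodule ℝ V) (hWN : IsCompl W N)
    (hstable : ∀ p ∈ W.prod N.dualAnnihilator, J p ∈ W.prod N.dualAnnihilator) :
    GenIsotropic (twistedProd ↥W V (inducedSplitJ J W N hWN) J)
      (LinearMap.graph W.subtype) := by
  refine (genIsotropic_graph_twistedProd_iff _ _ _).2 fun w ↦ ?_
  have hJw : (J (w, 0)).1 ∈ W := (hstable (w, 0) (by simp [Submodule.mem_prod])).1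
  rw [inducedSplitJ_apply_inl, Submodule.projectionOnto_apply_of_mem_left hWN hJw]
  exact ⟨rfl, rfl⟩

theorem split_subspace_satisfies_graph_condition
    (V : Type*) [AddCommGroup V] [Module ℝ V] [FiniteDimensional ℝ V]
    (J : (V × Module.Dual ℝ V) →ₗ[ℝ] (V × Module.Dual ℝ V)) (hJ : IsGCS V J)
    (W N : Submodule ℝ V) (hWN : IsCompl W N)
    (hstable : ∀ p ∈ W.prod N.dualAnnihilator, J p ∈ W.prod N.dualAnnihilator) :
    GenIsotropic (twistedProd ↥W V (inducedSplitJ J W N hWN) J)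
      (LinearMap.graph W.subtype) :=
  split_subspace_satisfies_graph_condition_general V J W N hWN hstable
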